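/- For natural numbers m, n and real x ≥ 0: L_{m+n}(x) = (n!/(m+n)!) e^x (d/dx)^m [e^{-x} x^m L_n^m(x)], where L_n^m is the generalized Laguerre polynomial. -/

import Mathlib

/-!
Rodrigues' formula `(d/dx)^n (e^{-x} x^{n+m}) = n! e^{-x} x^m L_n^m(x)` follows from the Leibniz
rule and `C(n,i) (n+m)!/(m+i)! = (n!/i!) C(n+m, n-i)`. It rewrites `(d/dx)^m [e^{-x} x^m L_n^m]`
as `(d/dx)^{m+n} (e^{-x} x^{m+n}) / n!`, which the same formula with `m = 0` evaluates as
`(m+n)! e^{-x} L_{m+n}(x)`, since `L_k^0 = L_k`.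
-/

open Real

/-- Laguerre polynomial. -/
noncomputable def laguerre (k : ℕ) (x : ℝ) : ℝ :=
  ∑ j ∈ Finset.range (k + 1), (-1 : ℝ) ^ j * (k.choose j) * x ^ j / j.factorial

/-- Generalized (associated) Laguerre polynomial. -/
noncomputable def laguerreA (n m : ℕ) (x : ℝ) : ℝ :=
  ∑ j ∈ Finset.range (n + 1), (-1 : ℝ) ^ j * ((n + m).choose (n - j)) * x ^ j / j.factorial

open Nat in
theorem Nat.choose_mul_descFactorial_mul_factorial {n i : ℕ} (m : ℕ) (hi : i ≤ n) :
    n.choose i * (n + m).descFactorial (n - i) * i ! = n ! * (n + m).choose (n - i) := by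
  rw [descFactorial_eq_factorial_mul_choose, ← choose_mul_factorial_mul_factorial hi]
  ring

theorem laguerreA_zero (k : ℕ) : laguerreA k 0 = laguerre k := by
  funext x
  refine Finset.sum_congr rfl fun j hj => ?_
  rw [Nat.add_zero, Nat.choose_symm (Finset.mem_range_succ_iff.mp hj)]

open Nat in
theorem iteratedDeriv_exp_neg_mul_pow_add (n m : ℕ) :
    iteratedDeriv n (fun y => exp (-y) * y ^ (n + m)) =
      fun x => n ! * (exp (-x) * x ^ m * laguerreA n m x) := by
  funext x
  have hexp (i : ℕ) : iteratedDeriv i (fun y => exp (-y)) x = (-1) ^ i * exp (-x) := by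
    simpa using congrFun (iteratedDeriv_exp_const_mul i (-1)) x
  rw [iteratedDeriv_fun_mul (by fun_prop) (by fun_prop), laguerreA, Finset.mul_sum, Finset.mul_sum]
  refine Finset.sum_congr rfl fun i hi => ?_
  have hi : i ≤ n := Finset.mem_range_succ_iff.mp hi
  have hcoef : (n.choose i : ℝ) * (n + m).descFactorial (n - i) =
      n ! * (n + m).choose (n - i) / i ! := by
    rw [eq_div_iff (by positivity)]
    exact_mod_cast choose_mul_descFactorial_mul_factorial m hi
  rw [hexp, iteratedDeriv_pow, show n + m - (n - i) = m + i by omega, pow_add]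
  linear_combination (-1) ^ i * exp (-x) * x ^ m * x ^ i * hcoef

theorem laguerre_add_eq_deriv_general (m n : ℕ) (x : ℝ) :
    laguerre (m + n) x =
      ((n.factorial : ℝ) / (m + n).factorial) * Real.exp x *
        (deriv^[m] (fun y : ℝ => Real.exp (-y) * y ^ m * laguerreA n m y)) x := by
  have hrodrigues : (fun y : ℝ => exp (-y) * y ^ m * laguerreA n m y) =
      fun y => (n.factorial : ℝ)⁻¹ * iteratedDeriv n (fun y => exp (-y) * y ^ (n + m)) y := by
    funext y
    rw [iteratedDeriv_exp_neg_mul_pow_add, inv_mul_cancel_left₀ (by positivity)]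
  have hderiv : deriv^[m] (fun y : ℝ => exp (-y) * y ^ m * laguerreA n m y) x =
      (n.factorial : ℝ)⁻¹ * ((m + n).factorial * (exp (-x) * laguerre (m + n) x)) := by
    rw [hrodrigues, ← iteratedDeriv_eq_iterate, iteratedDeriv_const_mul_field,
      iteratedDeriv_eq_iterate, iteratedDeriv_eq_iterate, ← Function.iterate_add_apply,
      ← iteratedDeriv_eq_iterate, show n + m = m + n + 0 by omega,
      iteratedDeriv_exp_neg_mul_pow_add, laguerreA_zero]
    simp only [pow_zero, mul_one]
  rw [hderiv, exp_neg]
  field_simp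

theorem laguerre_add_eq_deriv (m n : ℕ) (x : ℝ) (hx : 0 ≤ x) :
    laguerre (m + n) x =
      ((n.factorial : ℝ) / (m + n).factorial) * Real.exp x *
        (deriv^[m] (fun y : ℝ => Real.exp (-y) * y ^ m * laguerreA n m y)) x :=
  laguerre_add_eq_deriv_general m n x
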